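/- Define r̂_+^(ℓ) = 1 for all ℓ ≥ 1, and r̂_−^(1) = −1, r̂_−^(ℓ) = ρ(r̂_−^(ℓ−1))·(ℓ−2)/(ℓ−1) for ℓ ≥ 2. Then for every ℓ ≥ 1: √(u^(ℓ−1))·ρ(r̂_−^(ℓ)) + σ_b² ≤ K^(ℓ)(x,x') ≤ √(u^(ℓ−1))·ρ(r̂_+^(ℓ)) + σ_b² = √(u^(ℓ−1)) + σ_b², where u^(ℓ) = (‖x‖² + ℓσ_b²)·(‖x'‖² + ℓσ_b²). -/

import Mathlib

open Real

/-- The dual activation function of the scaled ReLU `φ(t) = √2·max(t,0)`. -/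
noncomputable def rho (r : ℝ) : ℝ :=
  (1 / π) * (Real.sqrt (1 - r ^ 2) + (π - Real.arccos r) * r)

/-- The dual activation function of the derivative of the scaled ReLU. -/
noncomputable def rhoPrime (r : ℝ) : ℝ := (π - Real.arccos r) / π

/-- The depth-`ℓ` NNGP kernel `K^(ℓ)` of a ReLU network with bias variance `σb²`,
defined recursively by `K^(0)(v,w) = ⟪v,w⟫` and
`K^(ℓ)(v,w) = √(K^(ℓ−1)(v,v)·K^(ℓ−1)(w,w))·ρ(K^(ℓ−1)(v,w)/√(K^(ℓ−1)(v,v)·K^(ℓ−1)(w,w))) + σb²`. -/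
noncomputable def Kker (σb : ℝ) {d : ℕ} :
    ℕ → EuclideanSpace ℝ (Fin d) → EuclideanSpace ℝ (Fin d) → ℝ
  | 0, v, w => (inner ℝ v w : ℝ)
  | ℓ + 1, v, w =>
      Real.sqrt (Kker σb ℓ v v * Kker σb ℓ w w) *
        rho (Kker σb ℓ v w / Real.sqrt (Kker σb ℓ v v * Kker σb ℓ w w)) + σb ^ 2

/-- `u^(ℓ) = (‖x‖² + ℓσ_b²)·(‖x'‖² + ℓσ_b²)`, stated for the norms `a = ‖x‖`, `b = ‖x'‖`. -/
noncomputable def uFun (σb a b : ℝ) (ℓ : ℕ) : ℝ :=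
  (a ^ 2 + ℓ * σb ^ 2) * (b ^ 2 + ℓ * σb ^ 2)

/-- `r̂_−^(1) = −1` and `r̂_−^(ℓ) = ρ(r̂_−^(ℓ−1))·(ℓ−2)/(ℓ−1)` for `ℓ ≥ 2`
(the value at `0` is junk). -/
noncomputable def rHatM : ℕ → ℝ
  | 0 => 0
  | 1 => -1
  | (n + 2) => rho (rHatM (n + 1)) * (n : ℝ) / ((n : ℝ) + 1)

/-!
The diagonal of the kernel is explicit, `K^(ℓ)(v,v) = ‖v‖² + ℓσ_b²`, so
`K^(ℓ+1)(x,x') = √(u^(ℓ)) ρ(c_ℓ) + σ_b²` with the correlation `c_ℓ = K^(ℓ)(x,x') / √(u^(ℓ))`.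
Since `ρ` is increasing on `[-1,1]` with `ρ(1) = 1`, it suffices to show by induction
`r̂_−^(ℓ+1) ≤ c_ℓ ≤ 1`. For the upper bound, AM–GM gives `√(u^(ℓ)) + σ_b² ≤ √(u^(ℓ+1))`; for the
lower bound, `√(u^(ℓ)) / √(u^(ℓ+1)) ≥ ℓ/(ℓ+1)`, which is where the factor in `r̂_−` comes from.
-/

lemma rho_one : rho 1 = 1 := by
  simp [rho]

lemma rho_neg_one : rho (-1) = 0 := by
  simp [rho]

lemma continuous_rho : Continuous rho := by
  unfold rho
  fun_prop

lemma hasDerivAt_rho {r : ℝ} (h₁ : -1 < r) (h₂ : r < 1) : HasDerivAt rho (rhoPrime r) r := by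
  have hpos : 0 < 1 - r ^ 2 := by nlinarith
  have hinner : HasDerivAt (fun t : ℝ => 1 - t ^ 2) (-(2 * r)) r := by
    simpa using (hasDerivAt_pow 2 r).const_sub 1
  have hsqrt := hinner.sqrt hpos.ne'
  have harccos := Real.hasDerivAt_arccos h₁.ne' h₂.ne
  have hsum := (hsqrt.add (((hasDerivAt_const r π).sub harccos).mul (hasDerivAt_id r))).const_mul
    (1 / π)
  refine hsum.congr_deriv ?_
  have : √(1 - r ^ 2) ≠ 0 := (Real.sqrt_pos.2 hpos).ne'
  simp only [rhoPrime, id, Pi.sub_apply]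
  field_simp
  ring

lemma rhoPrime_nonneg (r : ℝ) : 0 ≤ rhoPrime r :=
  div_nonneg (sub_nonneg.2 (Real.arccos_le_pi r)) Real.pi_pos.le

lemma monotoneOn_rho : MonotoneOn rho (Set.Icc (-1) 1) := by
  refine monotoneOn_of_hasDerivWithinAt_nonneg (convex_Icc _ _) continuous_rho.continuousOn
    (fun r hr => ?_) (fun r _ => rhoPrime_nonneg r)
  rw [interior_Icc] at hr ⊢
  exact (hasDerivAt_rho hr.1 hr.2).hasDerivWithinAt

lemma rho_mem_Icc {r : ℝ} (hr : r ∈ Set.Icc (-1) 1) : rho r ∈ Set.Icc 0 1 := by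
  have h₀ := monotoneOn_rho (Set.left_mem_Icc.2 (by norm_num)) hr hr.1
  have h₁ := monotoneOn_rho hr (Set.right_mem_Icc.2 (by norm_num)) hr.2
  rw [rho_neg_one] at h₀
  rw [rho_one] at h₁
  exact ⟨h₀, h₁⟩

lemma rHatM_succ_mem_Icc (n : ℕ) : rHatM (n + 1) ∈ Set.Icc (-1) 1 := by
  induction n with
  | zero => norm_num [rHatM]
  | succ n ih =>
    obtain ⟨h₀, h₁⟩ := rho_mem_Icc ih
    have hn : (0 : ℝ) ≤ n := n.cast_nonneg
    show rho (rHatM (n + 1)) * n / (n + 1) ∈ Set.Icc (-1) 1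
    constructor
    · have : 0 ≤ rho (rHatM (n + 1)) * n / (n + 1) := by positivity
      linarith
    · rw [div_le_one (by positivity)]
      nlinarith

lemma sqrt_mul_add_le_sqrt_add_mul_add {A B s : ℝ} (hA : 0 ≤ A) (hB : 0 ≤ B) (hs : 0 ≤ s) :
    √(A * B) + s ≤ √((A + s) * (B + s)) := by
  rw [Real.le_sqrt (by positivity) (by positivity), add_sq, Real.sq_sqrt (by positivity),
    Real.sqrt_mul hA]
  nlinarith [sq_nonneg (√A - √B), Real.sq_sqrt hA, Real.sq_sqrt hB]

lemma sqrt_uFun_add_le_sqrt_uFun_succ (σb a b : ℝ) (ℓ : ℕ) :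
    √(uFun σb a b ℓ) + σb ^ 2 ≤ √(uFun σb a b (ℓ + 1)) := by
  simp only [uFun]
  convert sqrt_mul_add_le_sqrt_add_mul_add (s := σb ^ 2)
    (by positivity : 0 ≤ a ^ 2 + ℓ * σb ^ 2) (by positivity : 0 ≤ b ^ 2 + ℓ * σb ^ 2)
    (by positivity) using 2
  push_cast
  ring

lemma mul_sqrt_uFun_succ_le (σb a b : ℝ) (ℓ : ℕ) :
    ℓ * √(uFun σb a b (ℓ + 1)) ≤ (ℓ + 1) * √(uFun σb a b ℓ) := by
  have hℓ : (0 : ℝ) ≤ ℓ := ℓ.cast_nonneg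
  have hfactor (c : ℝ) : ℓ * (c ^ 2 + (ℓ + 1) * σb ^ 2) ≤ (ℓ + 1) * (c ^ 2 + ℓ * σb ^ 2) := by
    nlinarith [sq_nonneg c]
  have hsq : ℓ ^ 2 * uFun σb a b (ℓ + 1) ≤ (ℓ + 1) ^ 2 * uFun σb a b ℓ := by
    simp only [uFun]
    push_cast
    nlinarith [mul_le_mul (hfactor a) (hfactor b) (by positivity) (by positivity)]
  have := Real.sqrt_le_sqrt hsq
  rwa [Real.sqrt_mul (sq_nonneg _), Real.sqrt_mul (sq_nonneg _), Real.sqrt_sq hℓ,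
    Real.sqrt_sq (by positivity)] at this

lemma mul_rho_div_mem_Icc {S k r : ℝ} (hS : 0 < S) (hr : -1 ≤ r) (hk : k ∈ Set.Icc (r * S) S) :
    S * rho (k / S) ∈ Set.Icc (S * rho r) S := by
  have hrk : r ≤ k / S := (le_div_iff₀ hS).2 hk.1
  have hkS : k / S ∈ Set.Icc (-1) 1 := ⟨hr.trans hrk, (div_le_one hS).2 hk.2⟩
  have hr1 : r ∈ Set.Icc (-1) 1 := ⟨hr, hrk.trans hkS.2⟩
  constructor
  · exact mul_le_mul_of_nonneg_left (monotoneOn_rho hr1 hkS hrk) hS.le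
  · exact mul_le_of_le_one_right hS.le (rho_mem_Icc hkS).2

section Kernel

variable {σb : ℝ} {d : ℕ} {x x' : EuclideanSpace ℝ (Fin d)}

lemma Kker_self {v : EuclideanSpace ℝ (Fin d)} (hv : v ≠ 0) (ℓ : ℕ) :
    Kker σb ℓ v v = ‖v‖ ^ 2 + ℓ * σb ^ 2 := by
  induction ℓ with
  | zero => simp [Kker]
  | succ ℓ ih =>
    have hpos : 0 < ‖v‖ ^ 2 + ℓ * σb ^ 2 := by
      have := norm_pos_iff.2 hv
      positivity
    rw [Kker, ih, Real.sqrt_mul_self hpos.le, div_self hpos.ne', rho_one]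
    push_cast
    ring

lemma Kker_succ (hx : x ≠ 0) (hx' : x' ≠ 0) (ℓ : ℕ) :
    Kker σb (ℓ + 1) x x' =
      √(uFun σb ‖x‖ ‖x'‖ ℓ) * rho (Kker σb ℓ x x' / √(uFun σb ‖x‖ ‖x'‖ ℓ)) + σb ^ 2 := by
  rw [Kker, Kker_self hx, Kker_self hx', uFun]

lemma Kker_succ_mem_Icc (hx : x ≠ 0) (hx' : x' ≠ 0) {ℓ : ℕ}
    (h : Kker σb ℓ x x' ∈ Set.Icc (rHatM (ℓ + 1) * √(uFun σb ‖x‖ ‖x'‖ ℓ)) √(uFun σb ‖x‖ ‖x'‖ ℓ)) :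
    Kker σb (ℓ + 1) x x' ∈
      Set.Icc (√(uFun σb ‖x‖ ‖x'‖ ℓ) * rho (rHatM (ℓ + 1)) + σb ^ 2)
        (√(uFun σb ‖x‖ ‖x'‖ ℓ) + σb ^ 2) := by
  have hu : 0 < √(uFun σb ‖x‖ ‖x'‖ ℓ) := by
    have := norm_pos_iff.2 hx
    have := norm_pos_iff.2 hx'
    exact Real.sqrt_pos.2 (by unfold uFun; positivity)
  obtain ⟨hlo, hhi⟩ := mul_rho_div_mem_Icc hu (rHatM_succ_mem_Icc ℓ).1 h
  rw [Kker_succ hx hx']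
  exact ⟨by linarith, by linarith⟩

lemma Kker_mem_Icc (hx : x ≠ 0) (hx' : x' ≠ 0) (ℓ : ℕ) :
    Kker σb ℓ x x' ∈ Set.Icc (rHatM (ℓ + 1) * √(uFun σb ‖x‖ ‖x'‖ ℓ)) √(uFun σb ‖x‖ ‖x'‖ ℓ) := by
  induction ℓ with
  | zero =>
    have hu : √(uFun σb ‖x‖ ‖x'‖ 0) = ‖x‖ * ‖x'‖ := by
      simp [uFun, Real.sqrt_mul]
    rw [hu, rHatM, neg_one_mul, Set.mem_Icc, ← abs_le]
    exact abs_real_inner_le_norm x x'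
  | succ ℓ ih =>
    obtain ⟨hlo, hhi⟩ := Kker_succ_mem_Icc hx hx' ih
    have hρ := (rho_mem_Icc (rHatM_succ_mem_Icc ℓ)).1
    have hratio := mul_sqrt_uFun_succ_le σb ‖x‖ ‖x'‖ ℓ
    constructor
    · calc rHatM (ℓ + 2) * √(uFun σb ‖x‖ ‖x'‖ (ℓ + 1))
          = rho (rHatM (ℓ + 1)) * (ℓ * √(uFun σb ‖x‖ ‖x'‖ (ℓ + 1))) / (ℓ + 1) := by
            rw [rHatM]; ring
        _ ≤ rho (rHatM (ℓ + 1)) * ((ℓ + 1) * √(uFun σb ‖x‖ ‖x'‖ ℓ)) / (ℓ + 1) := by gcongr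
        _ = √(uFun σb ‖x‖ ‖x'‖ ℓ) * rho (rHatM (ℓ + 1)) := by field_simp
        _ ≤ Kker σb (ℓ + 1) x x' := by linarith [sq_nonneg σb]
    · exact hhi.trans (sqrt_uFun_add_le_sqrt_uFun_succ σb ‖x‖ ‖x'‖ ℓ)

end Kernel

theorem Kker_bound_rHat_general (σb : ℝ) {d : ℕ}
    (x x' : EuclideanSpace ℝ (Fin d)) (hx : x ≠ 0) (hx' : x' ≠ 0) :
    ∀ ℓ : ℕ,
      Real.sqrt (uFun σb ‖x‖ ‖x'‖ ℓ) * rho (rHatM (ℓ + 1)) + σb ^ 2 ≤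
          Kker σb (ℓ + 1) x x' ∧
      Kker σb (ℓ + 1) x x' ≤
          Real.sqrt (uFun σb ‖x‖ ‖x'‖ ℓ) * rho 1 + σb ^ 2 ∧
      Real.sqrt (uFun σb ‖x‖ ‖x'‖ ℓ) * rho 1 + σb ^ 2 =
          Real.sqrt (uFun σb ‖x‖ ‖x'‖ ℓ) + σb ^ 2 := by
  intro ℓ
  obtain ⟨hlo, hhi⟩ := Kker_succ_mem_Icc hx hx' (Kker_mem_Icc hx hx' ℓ)
  rw [rho_one, mul_one]
  exact ⟨hlo, hhi, rfl⟩

/-- Corollary A.11: for every `ℓ ≥ 1` (written `ℓ+1`),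
`√(u^(ℓ−1))·ρ(r̂_−^(ℓ)) + σ_b² ≤ K^(ℓ)(x,x') ≤ √(u^(ℓ−1))·ρ(r̂_+^(ℓ)) + σ_b²
 = √(u^(ℓ−1)) + σ_b²` where `r̂_+^(ℓ) = 1`. -/
theorem Kker_bound_rHat (σb : ℝ) (hσb : 0 ≤ σb) {d : ℕ}
    (x x' : EuclideanSpace ℝ (Fin d)) (hx : x ≠ 0) (hx' : x' ≠ 0) :
    ∀ ℓ : ℕ,
      Real.sqrt (uFun σb ‖x‖ ‖x'‖ ℓ) * rho (rHatM (ℓ + 1)) + σb ^ 2 ≤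
          Kker σb (ℓ + 1) x x' ∧
      Kker σb (ℓ + 1) x x' ≤
          Real.sqrt (uFun σb ‖x‖ ‖x'‖ ℓ) * rho 1 + σb ^ 2 ∧
      Real.sqrt (uFun σb ‖x‖ ‖x'‖ ℓ) * rho 1 + σb ^ 2 =
          Real.sqrt (uFun σb ‖x‖ ‖x'‖ ℓ) + σb ^ 2 :=
  Kker_bound_rHat_general σb x x' hx hx'
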